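/- arXiv:1108.1584 — 2 statements merged into one kernel-verified Lean document; each statement's English description precedes it below -/
import Mathlib

section
/- Let d ≥ 1 and δ > 0, and define the 2-periodic potential V_δ : ℤ^d → ℝ by V_δ(n) = δ if Σ_{j=1}^d n_j is even and V_δ(n) = −δ otherwise. Then σ(Δ + V_δ) ∩ (−δ, δ) = ∅, i.e., the spectrum of Δ + V_δ on ℓ²(ℤ^d) contains a gap around 0. (Key estimate: ‖(Δ + V_δ)ψ‖² = ‖Δψ‖² + δ²‖ψ‖² ≥ δ²‖ψ‖² for all ψ ∈ ℓ²(ℤ^d).) -/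
noncomputable section

/-- `ℓ²(ℤ^d)`. -/
abbrev L2Zd (d : ℕ) := lp (fun _ : Fin d → ℤ => ℂ) 2

/-- `H` acts as the discrete Schrödinger operator `Δ + V` on `ℓ²(ℤ^d)`. -/
def ActsAsSchrodinger {d : ℕ} (V : (Fin d → ℤ) → ℝ) (H : L2Zd d →L[ℂ] L2Zd d) : Prop :=
  ∀ (u : L2Zd d) (n : Fin d → ℤ),
    (H u : (Fin d → ℤ) → ℂ) n =
      (∑ j, ((u : (Fin d → ℤ) → ℂ) (Function.update n j (n j - 1))
        + (u : (Fin d → ℤ) → ℂ) (Function.update n j (n j + 1))))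
      + (V n : ℂ) * (u : (Fin d → ℤ) → ℂ) n

namespace GapAux

open scoped ComplexConjugate ComplexInnerProductSpace

/-- A coercive bounded operator on a complex Hilbert space is invertible. -/
lemma isUnit_of_coercive {E : Type*} [NormedAddCommGroup E] [InnerProductSpace ℂ E]
    [CompleteSpace E] (T : E →L[ℂ] E) {c : ℝ} (hc : 0 < c)
    (hT : ∀ x : E, c * ‖x‖ ^ 2 ≤ (⟪T x, x⟫).re) : IsUnit T := by
  have hlow : ∀ x : E, c * ‖x‖ ≤ ‖T x‖ := by
    intro x
    rcases eq_or_ne x 0 with rfl | hx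
    · simp
    have hxpos : 0 < ‖x‖ := norm_pos_iff.mpr hx
    have h1 : c * ‖x‖ ^ 2 ≤ ‖T x‖ * ‖x‖ := by
      refine le_trans (hT x) (le_trans (Complex.re_le_norm _) ?_)
      exact norm_inner_le_norm (𝕜 := ℂ) _ _
    have := le_of_mul_le_mul_right (by nlinarith : c * ‖x‖ * ‖x‖ ≤ ‖T x‖ * ‖x‖) hxpos
    exact this
  have ha : AntilipschitzWith (⟨c, hc.le⟩ : NNReal)⁻¹ T := by
    refine T.antilipschitz_of_bound fun x => ?_
    show ‖x‖ ≤ c⁻¹ * ‖T x‖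
    rw [← div_eq_inv_mul, le_div_iff₀ hc]
    calc ‖x‖ * c = c * ‖x‖ := mul_comm _ _
      _ ≤ ‖T x‖ := hlow x
  have hker : T.ker = ⊥ := by
    exact LinearMap.ker_eq_bot.mpr ha.injective
  have hclosed : IsClosed ((T.range : Submodule ℂ E) : Set E) := by
    have h := ha.isClosed_range T.uniformContinuous
    simpa [LinearMap.coe_range] using h
  haveI : CompleteSpace (T.range : Submodule ℂ E) := hclosed.completeSpace_coe
  have htop : T.range = ⊤ := by
    rw [← Submodule.orthogonal_eq_bot_iff]
    rw [Submodule.eq_bot_iff]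
    intro x hx
    have h0 : ⟪T x, x⟫ = 0 :=
      (Submodule.mem_orthogonal _ x).mp hx (T x) ⟨x, rfl⟩
    have h1 := hT x
    rw [h0] at h1
    simp only [Complex.zero_re] at h1
    by_contra hxne
    have hxp : 0 < ‖x‖ := norm_pos_iff.mpr hxne
    have hpos := mul_pos hc (pow_pos hxp 2)
    linarith
  let e := ContinuousLinearEquiv.ofBijective T hker htop
  have hTe : ∀ x, T x = e x := fun x => rfl
  refine isUnit_iff_exists.mpr ⟨(e.symm : E →L[ℂ] E), ?_, ?_⟩
  · ext x
    simp only [ContinuousLinearMap.mul_apply, ContinuousLinearMap.one_apply,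
      ContinuousLinearMap.coe_coe]
    rw [hTe]
    exact e.apply_symm_apply x
  · ext x
    simp only [ContinuousLinearMap.mul_apply, ContinuousLinearMap.one_apply,
      ContinuousLinearMap.coe_coe]
    rw [hTe]
    exact e.symm_apply_apply x

variable {d : ℕ}

lemma memℓp_comp_equiv (f : L2Zd d) (σ : (Fin d → ℤ) ≃ (Fin d → ℤ)) :
    Memℓp (fun n => (f : (Fin d → ℤ) → ℂ) (σ n)) 2 := by
  apply memℓp_gen
  have h := (lp.memℓp f).summable (p := 2) (by norm_num)
  exact (σ.summable_iff
    (f := fun n => ‖(f : (Fin d → ℤ) → ℂ) n‖ ^ (2 : ENNReal).toReal)).mpr h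

/-- Translation by `v` on `ℓ²(ℤ^d)`. -/
def trans (v : Fin d → ℤ) (f : L2Zd d) : L2Zd d :=
  ⟨fun n => (f : (Fin d → ℤ) → ℂ) (n + v), memℓp_comp_equiv f (Equiv.addRight v)⟩

@[simp] lemma trans_apply (v : Fin d → ℤ) (f : L2Zd d) (n : Fin d → ℤ) :
    (trans v f : (Fin d → ℤ) → ℂ) n = (f : (Fin d → ℤ) → ℂ) (n + v) := rfl

lemma memℓp_mul {δ : ℝ} {V : (Fin d → ℤ) → ℝ} (hVabs : ∀ n, |V n| = δ) (f : L2Zd d) :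
    Memℓp (fun n => (V n : ℂ) * (f : (Fin d → ℤ) → ℂ) n) 2 := by
  have hδ0 : 0 ≤ δ := (hVabs default) ▸ abs_nonneg _
  apply memℓp_gen
  have h := ((lp.memℓp f).summable (p := 2) (by norm_num)).mul_left
    (δ ^ (2 : ENNReal).toReal)
  refine h.congr fun n => ?_
  have hnorm : ‖(V n : ℂ) * (f : (Fin d → ℤ) → ℂ) n‖
      = δ * ‖(f : (Fin d → ℤ) → ℂ) n‖ := by
    rw [norm_mul, Complex.norm_real, Real.norm_eq_abs, hVabs n]
  rw [hnorm, Real.mul_rpow hδ0 (norm_nonneg _)]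

/-- Multiplication by `V` on `ℓ²(ℤ^d)`. -/
def mulV {δ : ℝ} {V : (Fin d → ℤ) → ℝ} (hVabs : ∀ n, |V n| = δ) (f : L2Zd d) : L2Zd d :=
  ⟨fun n => (V n : ℂ) * (f : (Fin d → ℤ) → ℂ) n, memℓp_mul hVabs f⟩

@[simp] lemma mulV_apply {δ : ℝ} {V : (Fin d → ℤ) → ℝ} (hVabs : ∀ n, |V n| = δ)
    (f : L2Zd d) (n : Fin d → ℤ) :
    (mulV hVabs f : (Fin d → ℤ) → ℂ) n = (V n : ℂ) * (f : (Fin d → ℤ) → ℂ) n := rfl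

lemma inner_trans (v : Fin d → ℤ) (f g : L2Zd d) :
    ⟪trans v f, g⟫ = ⟪f, trans (-v) g⟫ := by
  rw [lp.inner_eq_tsum, lp.inner_eq_tsum,
    ← Equiv.tsum_eq (Equiv.addRight v)
      (fun m => ⟪(f : (Fin d → ℤ) → ℂ) m, (trans (-v) g : (Fin d → ℤ) → ℂ) m⟫)]
  refine tsum_congr fun n => ?_
  simp [Equiv.coe_addRight, add_neg_cancel_right]

lemma inner_mulV_symm {δ : ℝ} {V : (Fin d → ℤ) → ℝ} (hVabs : ∀ n, |V n| = δ)
    (f g : L2Zd d) : ⟪mulV hVabs f, g⟫ = ⟪f, mulV hVabs g⟫ := by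
  rw [lp.inner_eq_tsum, lp.inner_eq_tsum]
  refine tsum_congr fun n => ?_
  simp only [mulV_apply, RCLike.inner_apply, map_mul, Complex.conj_ofReal]
  ring

lemma update_sub (n : Fin d → ℤ) (j : Fin d) :
    Function.update n j (n j - 1) = n + -(Pi.single j 1) := by
  funext k
  rcases eq_or_ne k j with rfl | h
  · simp [Function.update_apply, Pi.single_apply, sub_eq_add_neg]
  · simp [Function.update_apply, Pi.single_apply, h]

lemma update_add (n : Fin d → ℤ) (j : Fin d) :
    Function.update n j (n j + 1) = n + Pi.single j 1 := by
  funext k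
  rcases eq_or_ne k j with rfl | h
  · simp [Function.update_apply, Pi.single_apply]
  · simp [Function.update_apply, Pi.single_apply, h]

lemma neg_single (j : Fin d) :
    -((Pi.single j 1 : (Fin d → ℤ))) = (Pi.single j (-1) : (Fin d → ℤ)) := by
  funext k
  rcases eq_or_ne k j with rfl | h
  · simp [Pi.single_apply]
  · simp [Pi.single_apply, h]

variable {δ : ℝ} {V : (Fin d → ℤ) → ℝ}

lemma V_abs (hδ : 0 < δ) (hV : ∀ n : Fin d → ℤ, V n = if Even (∑ j, n j) then δ else -δ) :
    ∀ n, |V n| = δ := by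
  intro n
  rw [hV n]
  split <;> simp [abs_of_pos hδ, abs_neg]

lemma V_flip (hV : ∀ n : Fin d → ℤ, V n = if Even (∑ j, n j) then δ else -δ)
    (n : Fin d → ℤ) (j : Fin d) (c : ℤ) (hc : Odd c) :
    V (n + Pi.single j c) = -V n := by
  have hnc : ¬ Even c := Int.not_even_iff_odd.mpr hc
  have hsum : (∑ k, ((n + Pi.single j c : Fin d → ℤ)) k) = (∑ k, n k) + c := by
    simp [Finset.sum_add_distrib, Finset.sum_pi_single']
  have hpar : Even (∑ k, ((n + Pi.single j c : Fin d → ℤ)) k) ↔ ¬ Even (∑ k, n k) := by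
    rw [hsum, Int.even_add]
    constructor
    · intro h hs
      exact hnc (h.mp hs)
    · intro h
      exact ⟨fun hs => absurd hs h, fun hcc => absurd hcc hnc⟩
  rw [hV, hV]
  rcases em (Even (∑ k, n k)) with he | he
  · rw [if_pos he, if_neg (fun h => (hpar.mp h) he)]
  · rw [if_pos (hpar.mpr he), if_neg he, neg_neg]

variable {H : L2Zd d →L[ℂ] L2Zd d}

lemma H_eq (hVabs : ∀ n, |V n| = δ) (hH : ActsAsSchrodinger V H) (f : L2Zd d) :
    H f = (∑ j, (trans (-(Pi.single j 1)) f + trans (Pi.single j 1) f)) + mulV hVabs f := by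
  apply lp.ext
  funext n
  rw [lp.coeFn_add, Pi.add_apply, lp.coeFn_sum, Finset.sum_apply, hH f n, mulV_apply]
  congr 1
  refine Finset.sum_congr rfl fun j _ => ?_
  rw [lp.coeFn_add, Pi.add_apply, update_sub, update_add, trans_apply, trans_apply]

lemma H_symm (hVabs : ∀ n, |V n| = δ) (hH : ActsAsSchrodinger V H) (f g : L2Zd d) :
    ⟪H f, g⟫ = ⟪f, H g⟫ := by
  rw [H_eq hVabs hH f, H_eq hVabs hH g, inner_add_left, inner_add_right,
    sum_inner, inner_sum, inner_mulV_symm]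
  congr 1
  refine Finset.sum_congr rfl fun j _ => ?_
  rw [inner_add_left, inner_add_right, inner_trans, inner_trans, neg_neg, add_comm]

lemma trans_mulV (hVabs : ∀ n, |V n| = δ)
    (hV : ∀ n : Fin d → ℤ, V n = if Even (∑ j, n j) then δ else -δ)
    (j : Fin d) (f : L2Zd d) :
    trans (-(Pi.single j 1)) (mulV hVabs f) = -(mulV hVabs (trans (-(Pi.single j 1)) f)) := by
  apply lp.ext
  funext n
  rw [lp.coeFn_neg, Pi.neg_apply, trans_apply, mulV_apply, mulV_apply, trans_apply]
  have hflip : V (n + -(Pi.single j 1)) = -V n := by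
    rw [neg_single]
    exact V_flip hV n j (-1) (by decide)
  rw [hflip]
  push_cast
  ring

/-- The key estimate: `‖H f‖² ≥ δ² ‖f‖²`. -/
lemma normHsq (hVabs : ∀ n, |V n| = δ)
    (hV : ∀ n : Fin d → ℤ, V n = if Even (∑ j, n j) then δ else -δ)
    (hH : ActsAsSchrodinger V H) (f : L2Zd d) :
    δ ^ 2 * ‖f‖ ^ 2 ≤ ‖H f‖ ^ 2 := by
  set A : L2Zd d := ∑ j, (trans (-(Pi.single j 1)) f + trans (Pi.single j 1) f) with hA
  have hHf : H f = A + mulV hVabs f := H_eq hVabs hH f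
  -- cross term vanishes
  have hcross : (⟪A, mulV hVabs f⟫).re = 0 := by
    rw [hA, sum_inner]
    rw [Complex.re_sum]
    refine Finset.sum_eq_zero fun j _ => ?_
    rw [inner_add_left]
    have hb : ⟪trans (Pi.single j 1) f, mulV hVabs f⟫
        = -(starRingEnd ℂ) ⟪trans (-(Pi.single j 1)) f, mulV hVabs f⟫ := by
      rw [inner_trans, trans_mulV hVabs hV, inner_neg_right, ← inner_mulV_symm,
        ← inner_conj_symm]
    rw [hb, Complex.add_re, Complex.neg_re, Complex.conj_re]
    ring
  -- norm of the potential part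
  have hMnorm : ‖mulV hVabs f‖ ^ 2 = δ ^ 2 * ‖f‖ ^ 2 := by
    have h1 : ⟪mulV hVabs f, mulV hVabs f⟫ = (δ : ℂ) ^ 2 * ⟪f, f⟫ := by
      rw [lp.inner_eq_tsum, lp.inner_eq_tsum, ← tsum_mul_left]
      refine tsum_congr fun n => ?_
      simp only [mulV_apply, RCLike.inner_apply, map_mul, Complex.conj_ofReal]
      have hsq : ((V n : ℂ)) ^ 2 = (δ : ℂ) ^ 2 := by
        have : (V n) ^ 2 = δ ^ 2 := by rw [← sq_abs, hVabs n]
        exact_mod_cast congrArg (Complex.ofReal) this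
      calc (V n : ℂ) * (f : (Fin d → ℤ) → ℂ) n
            * ((V n : ℂ) * (starRingEnd ℂ) ((f : (Fin d → ℤ) → ℂ) n))
          = ((V n : ℂ)) ^ 2 * ((f : (Fin d → ℤ) → ℂ) n
            * (starRingEnd ℂ) ((f : (Fin d → ℤ) → ℂ) n)) := by ring
        _ = (δ : ℂ) ^ 2 * ((f : (Fin d → ℤ) → ℂ) n
            * (starRingEnd ℂ) ((f : (Fin d → ℤ) → ℂ) n)) := by rw [hsq]
    rw [inner_self_eq_norm_sq_to_K, inner_self_eq_norm_sq_to_K] at h1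
    have h2 : ((‖mulV hVabs f‖ ^ 2 : ℝ) : ℂ) = ((δ ^ 2 * ‖f‖ ^ 2 : ℝ) : ℂ) := by
      push_cast
      exact h1
    exact_mod_cast h2
  have hexp : ‖H f‖ ^ 2 = ‖A‖ ^ 2 + δ ^ 2 * ‖f‖ ^ 2 := by
    rw [hHf, @norm_add_sq ℂ _ _ _ _ A (mulV hVabs f), hMnorm]
    simp only [RCLike.re_to_complex]
    rw [hcross]
    ring
  nlinarith [sq_nonneg ‖A‖]

end GapAux

open GapAux in
open scoped ComplexInnerProductSpace in
/-- **A gap for the checkerboard potential.** For `d ≥ 1` and `δ > 0`, let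
`V_δ(n) = δ` if `Σ_j n_j` is even and `V_δ(n) = −δ` otherwise. Then
`σ(Δ + V_δ) ∩ (−δ, δ) = ∅`. -/
theorem stmt1 (d : ℕ) (hd : 1 ≤ d) (δ : ℝ) (hδ : 0 < δ)
    (V : (Fin d → ℤ) → ℝ)
    (hV : ∀ n : Fin d → ℤ, V n = if Even (∑ j, n j) then δ else -δ)
    (H : L2Zd d →L[ℂ] L2Zd d) (hH : ActsAsSchrodinger V H) :
    spectrum ℂ H ∩ (Complex.ofReal '' Set.Ioo (-δ) δ) = ∅ := by
  have hVabs : ∀ n, |V n| = δ := V_abs hδ hV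
  ext z
  simp only [Set.mem_inter_iff, Set.mem_image, Set.mem_empty_iff_false, iff_false, not_and]
  rintro hzs ⟨x, hx, rfl⟩
  rw [Set.mem_Ioo] at hx
  obtain ⟨hx1, hx2⟩ := hx
  have hxsq : x ^ 2 < δ ^ 2 := sq_lt_sq' hx1 hx2
  set c : ℝ := δ ^ 2 - x ^ 2 with hc
  have hcpos : 0 < c := by simp [hc]; nlinarith
  -- the coercive operator T = H² - x²
  set P : L2Zd d →L[ℂ] L2Zd d := algebraMap ℂ _ ((x : ℝ) : ℂ) with hP
  set T : L2Zd d →L[ℂ] L2Zd d := H * H - algebraMap ℂ _ (((x : ℝ) : ℂ) ^ 2) with hT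
  have hTcoer : ∀ f : L2Zd d, c * ‖f‖ ^ 2 ≤ (⟪T f, f⟫).re := by
    intro f
    have hTf : T f = H (H f) - ((x : ℂ) ^ 2) • f := by
      rw [hT]
      simp [ContinuousLinearMap.sub_apply, ContinuousLinearMap.mul_apply,
        Algebra.algebraMap_eq_smul_one, ContinuousLinearMap.smul_apply]
    have hinner : ⟪T f, f⟫ = ((‖H f‖ ^ 2 - x ^ 2 * ‖f‖ ^ 2 : ℝ) : ℂ) := by
      have hconj : (starRingEnd ℂ) (((x : ℝ) : ℂ) ^ 2) = ((x : ℝ) : ℂ) ^ 2 := by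
        rw [map_pow, Complex.conj_ofReal]
      rw [hTf, inner_sub_left, inner_smul_left, H_symm hVabs hH (H f) f,
        inner_self_eq_norm_sq_to_K, inner_self_eq_norm_sq_to_K, hconj]
      push_cast
      rw [sub_eq_neg_add]
      exact (sub_eq_neg_add _ _).symm
    rw [hinner, Complex.ofReal_re]
    have hkey := normHsq hVabs hV hH f
    have h2 : 0 ≤ ‖f‖ ^ 2 := sq_nonneg _
    nlinarith
  have hTunit : IsUnit T := isUnit_of_coercive T hcpos hTcoer
  -- deduce that x - H is a unit
  set a : L2Zd d →L[ℂ] L2Zd d := algebraMap ℂ _ ((x : ℝ) : ℂ) - H with ha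
  set b : L2Zd d →L[ℂ] L2Zd d := algebraMap ℂ _ ((x : ℝ) : ℂ) + H with hb
  have hPP : P * P = algebraMap ℂ (L2Zd d →L[ℂ] L2Zd d) (((x : ℝ) : ℂ) ^ 2) := by
    rw [hP, ← map_mul, ← sq]
  have hPH : P * H = H * P := Algebra.commutes _ _
  have hab : a * b = -T := by
    have : a * b = P * P + (P * H - H * P) - H * H := by
      rw [ha, hb, hP]; noncomm_ring
    rw [this, hPH, sub_self, add_zero, hPP, hT, neg_sub]
  have hba : b * a = -T := by
    have : b * a = P * P + (H * P - P * H) - H * H := by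
      rw [ha, hb, hP]; noncomm_ring
    rw [this, hPH, sub_self, add_zero, hPP, hT, neg_sub]
  have hu : IsUnit (-T) := hTunit.neg
  have haUnit : IsUnit a := by
    have huv : (↑hu.unit : L2Zd d →L[ℂ] L2Zd d) = -T := hu.unit_spec
    have hcA : Commute a ↑hu.unit := by
      show a * ↑hu.unit = ↑hu.unit * a
      rw [huv]
      conv_lhs => rw [← hba]
      conv_rhs => rw [← hab]
      rw [mul_assoc]
    have hcInv : Commute a ↑hu.unit⁻¹ := hcA.units_inv_right
    refine isUnit_iff_exists.mpr ⟨b * ↑hu.unit⁻¹, ?_, ?_⟩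
    · rw [← mul_assoc, hab]
      exact hu.mul_val_inv
    · rw [mul_assoc, ← hcInv.eq, ← mul_assoc, hba]
      exact hu.mul_val_inv
  exact (spectrum.mem_iff.mp hzs) haUnit

end
end

section
/- Let A and B be normal n × n complex matrices, ε > 0, and t ∈ (0, 1/100). Assume: (i) 0 is a simple eigenvalue of A; (ii) σ(A) ∩ {z ∈ ℂ : |z| < ε} = {0}; (iii) ‖A − B‖ ≤ tε. Then σ(B) ∩ {z ∈ ℂ : |z| < ε/2} consists of a single eigenvalue λ, and |λ| ≤ tε. Moreover, if φ is a normalized eigenvector of B with Bφ = λφ and ψ is any vector with ‖ψ‖ = 1 and ‖Aψ‖ ≤ tε, then there exists a ∈ ℂ with ‖ψ − aφ‖ ≤ 16t. -/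
noncomputable section
open scoped Matrix
open Polynomial

namespace Stmt5Aux

variable {n : ℕ}

lemma finite_contOn {s : Set ℂ} (hs : s.Finite) (f : ℂ → ℂ) : ContinuousOn f s := by
  haveI := hs.to_subtype
  rw [continuousOn_iff_continuous_restrict]
  exact continuous_of_discreteTopology

lemma isStarNormal_clm {A : Matrix (Fin n) (Fin n) ℂ} (hA : Aᴴ * A = A * Aᴴ) :
    IsStarNormal (Matrix.toEuclideanCLM (𝕜 := ℂ) A) := by
  constructor
  rw [commute_iff_eq, ← map_star, ← _root_.map_mul, ← _root_.map_mul]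
  exact congrArg _ (by simpa [Matrix.star_eq_conjTranspose] using hA)

lemma eval_charpoly (M : Matrix (Fin n) (Fin n) ℂ) (z : ℂ) :
    M.charpoly.eval z = Matrix.det (z • (1 : Matrix (Fin n) (Fin n) ℂ) - M) := by
  rw [Matrix.charpoly, _root_.eval_det, _root_.matPolyEquiv_eval_eq_map]
  congr 1
  ext i j
  by_cases h : i = j <;>
    simp [Matrix.charmatrix_apply, h, Matrix.one_apply, Matrix.diagonal_apply,
      Matrix.map_apply, Matrix.sub_apply, Matrix.smul_apply]

lemma mem_roots_iff_det (M : Matrix (Fin n) (Fin n) ℂ) (z : ℂ) :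
    z ∈ M.charpoly.roots ↔ (z • (1 : Matrix (Fin n) (Fin n) ℂ) - M).det = 0 := by
  rw [mem_roots M.charpoly_monic.ne_zero, IsRoot.def, eval_charpoly]

lemma mem_roots_iff_eig (M : Matrix (Fin n) (Fin n) ℂ) (z : ℂ) :
    z ∈ M.charpoly.roots ↔
      ∃ x : EuclideanSpace ℂ (Fin n), x ≠ 0 ∧ Matrix.toEuclideanCLM (𝕜 := ℂ) M x = z • x := by
  rw [mem_roots_iff_det, ← Matrix.exists_mulVec_eq_zero_iff]
  have key : ∀ v : Fin n → ℂ, (z • (1 : Matrix (Fin n) (Fin n) ℂ) - M) *ᵥ v = z • v - M *ᵥ v := by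
    intro v
    rw [Matrix.sub_mulVec, Matrix.smul_mulVec, Matrix.one_mulVec]
  constructor
  · rintro ⟨v, hv, hv0⟩
    refine ⟨(WithLp.equiv 2 _).symm v, by simpa using hv, ?_⟩
    rw [key v, sub_eq_zero] at hv0
    rw [WithLp.equiv_symm_apply, Matrix.toEuclideanCLM_toLp, ← hv0]
    simp
  · rintro ⟨x, hx, hx0⟩
    refine ⟨WithLp.equiv 2 _ x, by simpa using hx, ?_⟩
    rw [key, sub_eq_zero]
    have := congrArg (WithLp.equiv 2 (Fin n → ℂ)) hx0
    rw [WithLp.equiv_apply, Matrix.ofLp_toEuclideanCLM, ← WithLp.equiv_apply] at this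
    rw [this]
    simp

lemma spec_clm (M : Matrix (Fin n) (Fin n) ℂ) :
    spectrum ℂ (Matrix.toEuclideanCLM (𝕜 := ℂ) M) = {z | z ∈ M.charpoly.roots} := by
  rw [AlgEquiv.spectrum_eq (Matrix.toEuclideanCLM (𝕜 := ℂ)) M]
  ext z
  rw [Set.mem_setOf_eq, mem_roots_iff_det, spectrum.mem_iff, Matrix.isUnit_iff_isUnit_det,
    Algebra.algebraMap_eq_smul_one, isUnit_iff_ne_zero, not_not]

lemma charpoly_toEuclideanLin (M : Matrix (Fin n) (Fin n) ℂ) :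
    (Matrix.toEuclideanLin (𝕜 := ℂ) M).charpoly = M.charpoly := by
  rw [← LinearMap.charpoly_toMatrix (Matrix.toEuclideanLin (𝕜 := ℂ) M) (PiLp.basisFun 2 ℂ (Fin n))]
  congr 1
  rw [Matrix.toEuclideanLin_eq_toLin, LinearMap.toMatrix_toLin]

lemma finrank_ker_le (M : Matrix (Fin n) (Fin n) ℂ) (h₁ : M.charpoly.roots.count 0 = 1) :
    Module.finrank ℂ (LinearMap.ker (Matrix.toEuclideanLin (𝕜 := ℂ) M)) ≤ 1 := by
  set f : Module.End ℂ (EuclideanSpace ℂ (Fin n)) := Matrix.toEuclideanLin (𝕜 := ℂ) M with hf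
  have h2 : Module.finrank ℂ (f.maxGenEigenspace 0) = 1 := by
    rw [LinearMap.finrank_maxGenEigenspace_zero_eq, ← rootMultiplicity_eq_natTrailingDegree',
      ← count_roots]
    have : f.charpoly = M.charpoly := charpoly_toEuclideanLin M
    rw [this, h₁]
  have hker : LinearMap.ker f ≤ f.maxGenEigenspace 0 := by
    intro x hx
    rw [LinearMap.mem_ker] at hx
    rw [Module.End.mem_maxGenEigenspace]
    exact ⟨1, by simpa using hx⟩
  calc Module.finrank ℂ (LinearMap.ker f)
      ≤ Module.finrank ℂ (f.maxGenEigenspace 0) := Submodule.finrank_mono hker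
    _ = 1 := h2

end Stmt5Aux

open scoped InnerProductSpace

set_option maxHeartbeats 8000000 in
/-- **Stability of a simple isolated eigenvalue of a normal matrix.**
Let `A`, `B` be normal `n × n` complex matrices, `ε > 0`, `t ∈ (0, 1/100)`. Assume
(i) `0` is a simple eigenvalue of `A` (a root of multiplicity exactly one of `det(λI − A)`);
(ii) `σ(A) ∩ {|z| < ε} = {0}`;
(iii) `‖A − B‖ ≤ tε` in operator norm.
Then `σ(B) ∩ {|z| < ε/2}` consists of a single eigenvalue `λ` with `|λ| ≤ tε`, and whenever
`φ` is a normalized eigenvector of `B` for `λ` and `ψ` is a unit vector with `‖ψ‖ = 1` and `‖Aψ‖ ≤ tε`,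
there is `a ∈ ℂ` with `‖ψ − aφ‖ ≤ 16t`. -/
theorem stmt5 (n : ℕ) (A B : Matrix (Fin n) (Fin n) ℂ)
    (hA : Aᴴ * A = A * Aᴴ) (hB : Bᴴ * B = B * Bᴴ)
    (ε t : ℝ) (hε : 0 < ε) (ht : t ∈ Set.Ioo (0 : ℝ) (1 / 100))
    (h₁ : A.charpoly.roots.count 0 = 1)
    (h₂ : {z : ℂ | z ∈ A.charpoly.roots ∧ ‖z‖ < ε} = {0})
    (h₃ : ‖Matrix.toEuclideanCLM (𝕜 := ℂ) A - Matrix.toEuclideanCLM (𝕜 := ℂ) B‖ ≤ t * ε) :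
    ∃ lam : ℂ,
      {z : ℂ | z ∈ B.charpoly.roots ∧ ‖z‖ < ε / 2} = {lam} ∧
      ‖lam‖ ≤ t * ε ∧
      ∀ φ : EuclideanSpace ℂ (Fin n), ‖φ‖ = 1 →
        Matrix.toEuclideanCLM (𝕜 := ℂ) B φ = lam • φ →
        ∀ ψ : EuclideanSpace ℂ (Fin n), ‖ψ‖ = 1 →
          ‖Matrix.toEuclideanCLM (𝕜 := ℂ) A ψ‖ ≤ t * ε →
          ∃ a : ℂ, ‖ψ - a • φ‖ ≤ 16 * t := by
  obtain ⟨ht0, ht1⟩ := ht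
  have h00 : (0:ℂ) ∈ {z : ℂ | z ∈ A.charpoly.roots ∧ ‖z‖ < ε} := by rw [h₂]; rfl
  obtain ⟨h0roots, -⟩ := h00
  haveI hne : Nonempty (Fin n) := by
    rcases isEmpty_or_nonempty (Fin n) with h | h
    · exfalso
      have hc1 : A.charpoly = 1 := by rw [Matrix.charpoly]; exact Matrix.det_isEmpty
      rw [hc1, Polynomial.roots_one] at h0roots
      simp at h0roots
    · exact h
  set T := Matrix.toEuclideanCLM (𝕜 := ℂ) A with hT
  set TB := Matrix.toEuclideanCLM (𝕜 := ℂ) B with hTBdef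
  haveI : IsStarNormal T := Stmt5Aux.isStarNormal_clm hA
  haveI hTBnormal : IsStarNormal TB := Stmt5Aux.isStarNormal_clm hB
  have hspecA : spectrum ℂ T = {z | z ∈ A.charpoly.roots} := Stmt5Aux.spec_clm A
  have hspecB : spectrum ℂ TB = {z | z ∈ B.charpoly.roots} := Stmt5Aux.spec_clm B
  have hfinA : (spectrum ℂ T).Finite := by rw [hspecA]; exact A.charpoly.roots.finite_toSet
  have hfinB : (spectrum ℂ TB).Finite := by rw [hspecB]; exact B.charpoly.roots.finite_toSet
  have hAspec : ∀ z ∈ spectrum ℂ T, z = 0 ∨ ε ≤ ‖z‖ := by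
    intro z hz
    rw [hspecA] at hz
    by_cases h : ‖z‖ < ε
    · left
      have : z ∈ ({0} : Set ℂ) := h₂ ▸ (⟨hz, h⟩ : z ∈ {z : ℂ | z ∈ A.charpoly.roots ∧ ‖z‖ < ε})
      simpa using this
    · right; linarith [not_lt.mp h]
  have hdiff : ∀ x : EuclideanSpace ℂ (Fin n), ‖T x - TB x‖ ≤ t * ε * ‖x‖ := by
    intro x
    have h1 : ‖(T - TB) x‖ ≤ ‖T - TB‖ * ‖x‖ := (T - TB).le_opNorm x
    rw [ContinuousLinearMap.sub_apply] at h1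
    exact h1.trans (mul_le_mul_of_nonneg_right h₃ (norm_nonneg x))
  -- the normalized kernel vector ψ₀
  obtain ⟨x₀, hx₀ne, hx₀⟩ := (Stmt5Aux.mem_roots_iff_eig A 0).mp h0roots
  rw [zero_smul] at hx₀
  have hx₀norm : ‖x₀‖ ≠ 0 := norm_ne_zero_iff.mpr hx₀ne
  set ψ₀ : EuclideanSpace ℂ (Fin n) := (‖x₀‖ : ℂ)⁻¹ • x₀ with hψ₀def
  have hψ₀norm : ‖ψ₀‖ = 1 := by
    rw [hψ₀def, norm_smul, norm_inv, Complex.norm_real, Real.norm_eq_abs, abs_of_nonneg (norm_nonneg x₀)]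
    field_simp
  have hTψ₀ : T ψ₀ = 0 := by rw [hψ₀def, map_smul, hx₀, smul_zero]
  have hψ₀ne : ψ₀ ≠ 0 := by
    intro h; rw [h, norm_zero] at hψ₀norm; norm_num at hψ₀norm
  clear_value ψ₀
  -- the spectral projection P and pseudo-inverse S
  set gP : ℂ → ℂ := fun z => if ‖z‖ < ε/2 then 1 else 0 with hgP
  set gS : ℂ → ℂ := fun z => if ‖z‖ < ε/2 then 0 else z⁻¹ with hgS
  set P := cfc gP T with hPdef
  set S := cfc gS T with hSdef
  have hST : S * T = 1 - P := by
    have e1 : cfc (fun z : ℂ => gS z * z) T = cfc gS T * cfc (fun z : ℂ => z) T :=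
      cfc_mul _ _ T (Stmt5Aux.finite_contOn hfinA _) (Stmt5Aux.finite_contOn hfinA _)
    rw [cfc_id' ℂ T] at e1
    have e2 : cfc (fun z : ℂ => gS z * z) T = cfc (fun z : ℂ => 1 - gP z) T := by
      apply cfc_congr
      intro z hz
      rcases hAspec z hz with h0 | hεz
      · subst h0
        simp [hgS, hgP, half_pos hε]
      · have hz2 : ¬ ‖z‖ < ε / 2 := by push_neg; linarith
        have hzne : z ≠ 0 := by
          intro h; rw [h] at hεz; simp at hεz; linarith
        simp [hgS, hgP, hz2, inv_mul_cancel₀ hzne]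
    have e3 : cfc (fun z : ℂ => 1 - gP z) T = 1 - P := by
      have := cfc_sub (fun _ : ℂ => (1:ℂ)) gP T (Stmt5Aux.finite_contOn hfinA _)
        (Stmt5Aux.finite_contOn hfinA _)
      rw [this, cfc_const_one ℂ T]
    rw [← e1, e2, e3]
  have hTP : T * P = 0 := by
    have e1 : cfc (fun z : ℂ => z * gP z) T = cfc (fun z : ℂ => z) T * cfc gP T :=
      cfc_mul _ _ T (Stmt5Aux.finite_contOn hfinA _) (Stmt5Aux.finite_contOn hfinA _)
    rw [cfc_id' ℂ T] at e1
    have e2 : cfc (fun z : ℂ => z * gP z) T = cfc (fun _ : ℂ => (0:ℂ)) T := by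
      apply cfc_congr
      intro z hz
      rcases hAspec z hz with h0 | hεz
      · subst h0; simp [hgP]
      · have hz2 : ¬ ‖z‖ < ε / 2 := by push_neg; linarith
        simp [hgP, hz2]
    have e3 : cfc (fun _ : ℂ => (0:ℂ)) T = 0 := by
      rw [cfc_const 0 T, map_zero]
    rw [← e1, e2, e3]
  have hPP : P * P = P := by
    have e1 : cfc (fun z : ℂ => gP z * gP z) T = cfc gP T * cfc gP T :=
      cfc_mul _ _ T (Stmt5Aux.finite_contOn hfinA _) (Stmt5Aux.finite_contOn hfinA _)
    have e2 : cfc (fun z : ℂ => gP z * gP z) T = cfc gP T := by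
      apply cfc_congr
      intro z hz
      by_cases h : ‖z‖ < ε/2 <;> simp [hgP, h]
    rw [← e1, e2]
  have hPstar : star P = P := by
    rw [hPdef, ← cfc_star]
    apply cfc_congr
    intro z hz
    by_cases h : ‖z‖ < ε/2 <;> simp [hgP, h]
  have hSnorm : ‖S‖ ≤ ε⁻¹ := by
    apply norm_cfc_le (by positivity)
    intro z hz
    rcases hAspec z hz with h0 | hεz
    · subst h0; simp [hgS, half_pos hε]; positivity
    · have hz2 : ¬ ‖z‖ < ε / 2 := by push_neg; linarith
      simp only [hgS, if_neg hz2]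
      rw [norm_inv]
      have h1 : ε ≤ ‖z‖ := hεz
      exact inv_anti₀ hε h1
  have hPnorm : ‖P‖ ≤ 1 := by
    apply norm_cfc_le zero_le_one
    intro z hz
    by_cases h : ‖z‖ < ε/2 <;> simp [hgP, h]
  have happly : ∀ x : EuclideanSpace ℂ (Fin n), x - P x = S (T x) := by
    intro x
    have h := congrArg (fun L : EuclideanSpace ℂ (Fin n) →L[ℂ] EuclideanSpace ℂ (Fin n) => L x) hST
    simpa [ContinuousLinearMap.mul_apply, ContinuousLinearMap.sub_apply,
      ContinuousLinearMap.one_apply] using h.symm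
  have hkey : ∀ x : EuclideanSpace ℂ (Fin n), ‖x - P x‖ ≤ ‖T x‖ / ε := by
    intro x
    rw [happly x]
    calc ‖S (T x)‖ ≤ ‖S‖ * ‖T x‖ := S.le_opNorm _
      _ ≤ ε⁻¹ * ‖T x‖ := mul_le_mul_of_nonneg_right hSnorm (norm_nonneg _)
      _ = ‖T x‖ / ε := by rw [div_eq_mul_inv, mul_comm]
  have hTPx : ∀ x : EuclideanSpace ℂ (Fin n), T (P x) = 0 := by
    intro x
    have h := congrArg (fun L : EuclideanSpace ℂ (Fin n) →L[ℂ] EuclideanSpace ℂ (Fin n) => L x) hTP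
    simpa [ContinuousLinearMap.mul_apply] using h
  have hPfix : ∀ x : EuclideanSpace ℂ (Fin n), T x = 0 → P x = x := by
    intro x hx
    have h := happly x
    rw [hx, map_zero] at h
    exact (eq_of_sub_eq_zero h).symm
  -- kernel is spanned by ψ₀
  have hmemK : ∀ x : EuclideanSpace ℂ (Fin n),
      x ∈ LinearMap.ker (Matrix.toEuclideanLin (𝕜 := ℂ) A) ↔ T x = 0 := by
    intro x
    rw [LinearMap.mem_ker]
    have : Matrix.toEuclideanLin (𝕜 := ℂ) A x = T x := by
      rw [hT, ← Matrix.coe_toEuclideanCLM_eq_toEuclideanLin]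
      rfl
    rw [this]
  have hψ₀K : ψ₀ ∈ LinearMap.ker (Matrix.toEuclideanLin (𝕜 := ℂ) A) := (hmemK ψ₀).mpr hTψ₀
  have hspan : Submodule.span ℂ {ψ₀} = LinearMap.ker (Matrix.toEuclideanLin (𝕜 := ℂ) A) := by
    apply Submodule.eq_of_le_of_finrank_le
    · rw [Submodule.span_le]; simpa using hψ₀K
    · rw [finrank_span_singleton hψ₀ne]
      exact Stmt5Aux.finrank_ker_le A h₁
  have hrep : ∀ x : EuclideanSpace ℂ (Fin n), ∃ c : ℂ, P x = c • ψ₀ := by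
    intro x
    have hPxK : P x ∈ LinearMap.ker (Matrix.toEuclideanLin (𝕜 := ℂ) A) := (hmemK _).mpr (hTPx x)
    rw [← hspan, Submodule.mem_span_singleton] at hPxK
    obtain ⟨c, hc⟩ := hPxK
    exact ⟨c, hc.symm⟩
  have decomp : ∀ x : EuclideanSpace ℂ (Fin n), ∃ c : ℂ, P x = c • ψ₀ ∧ ‖x - c • ψ₀‖ ≤ ‖T x‖ / ε := by
    intro x
    obtain ⟨c, hc⟩ := hrep x
    exact ⟨c, hc, by rw [← hc]; exact hkey x⟩
  have hPinner : ∀ x y : EuclideanSpace ℂ (Fin n), ⟪P x, y⟫_ℂ = ⟪x, P y⟫_ℂ := by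
    intro x y
    conv_lhs => rw [← hPstar, ContinuousLinearMap.star_eq_adjoint]
    exact ContinuousLinearMap.adjoint_inner_left P y x
  -- adjoint eigenvectors for the normal operator TB
  have hadj : ∀ (μ : ℂ) (x : EuclideanSpace ℂ (Fin n)), TB x = μ • x →
      ContinuousLinearMap.adjoint TB x = (starRingEnd ℂ) μ • x := by
    intro μ x hx
    set N : EuclideanSpace ℂ (Fin n) →L[ℂ] EuclideanSpace ℂ (Fin n) := TB - μ • 1 with hN
    have hNx : N x = 0 := by
      rw [hN, ContinuousLinearMap.sub_apply, ContinuousLinearMap.smul_apply,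
        ContinuousLinearMap.one_apply, hx, sub_self]
    have hadj1 : ContinuousLinearMap.adjoint
        (1 : EuclideanSpace ℂ (Fin n) →L[ℂ] EuclideanSpace ℂ (Fin n)) = 1 := by
      rw [← ContinuousLinearMap.star_eq_adjoint, star_one]
    have hstarN : star N = star TB - (starRingEnd ℂ μ) • 1 := by
      rw [hN, ContinuousLinearMap.star_eq_adjoint, map_sub, LinearIsometryEquiv.map_smulₛₗ,
        hadj1, ContinuousLinearMap.star_eq_adjoint]
    have hcomm : star N * N = N * star N := by
      have h := hTBnormal.star_comm_self.eq
      rw [hN] at hstarN ⊢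
      rw [hstarN]
      simp only [mul_sub, sub_mul, smul_mul_assoc, mul_smul_comm, mul_one, one_mul,
        smul_smul, smul_sub]
      rw [h, mul_comm μ (starRingEnd ℂ μ)]
      abel
    have h0 : ⟪star N x, star N x⟫_ℂ = 0 := by
      calc ⟪star N x, star N x⟫_ℂ = ⟪x, N (star N x)⟫_ℂ := by
            conv_lhs => rw [ContinuousLinearMap.star_eq_adjoint]
            exact ContinuousLinearMap.adjoint_inner_left N (star N x) x
        _ = ⟪x, (N * star N) x⟫_ℂ := rfl
        _ = ⟪x, (star N * N) x⟫_ℂ := by rw [← hcomm]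
        _ = ⟪x, star N (N x)⟫_ℂ := rfl
        _ = 0 := by rw [hNx, map_zero, inner_zero_right]
    have h1 : star N x = 0 := by rwa [inner_self_eq_zero] at h0
    have h2 : star TB x - (starRingEnd ℂ) μ • x = 0 := by
      rw [hstarN, ContinuousLinearMap.sub_apply, ContinuousLinearMap.smul_apply,
        ContinuousLinearMap.one_apply] at h1
      exact h1
    rw [← ContinuousLinearMap.star_eq_adjoint]
    exact sub_eq_zero.mp h2
  have horth : ∀ (μ ν : ℂ) (x y : EuclideanSpace ℂ (Fin n)), TB x = μ • x → TB y = ν • y →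
      μ ≠ ν → ⟪x, y⟫_ℂ = 0 := by
    intro μ ν x y hx hy hne'
    have h1 : ⟪x, TB y⟫_ℂ = ν * ⟪x, y⟫_ℂ := by rw [hy, inner_smul_right]
    have h2 : ⟪x, TB y⟫_ℂ = μ * ⟪x, y⟫_ℂ := by
      rw [← ContinuousLinearMap.adjoint_inner_left, hadj μ x hx, inner_smul_left]
      simp
    have h3 : (μ - ν) * ⟪x, y⟫_ℂ = 0 := by linear_combination h1 - h2
    rcases mul_eq_zero.mp h3 with h | h
    · exact absurd (sub_eq_zero.mp h) hne'
    · exact h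
  -- norm of TB ψ₀
  have hTBψ₀ : ‖TB ψ₀‖ ≤ t * ε := by
    have h := hdiff ψ₀
    rw [hTψ₀, zero_sub, norm_neg, hψ₀norm, mul_one] at h
    exact h
  -- existence of lam
  have hrootsB_ne : {z : ℂ | z ∈ B.charpoly.roots}.Nonempty := by
    have hn : 0 < n := Fin.pos_iff_nonempty.mpr hne
    have hdeg : B.charpoly.degree ≠ 0 := by
      rw [Polynomial.degree_eq_natDegree B.charpoly_monic.ne_zero,
        Matrix.charpoly_natDegree_eq_dim, Fintype.card_fin]
      exact_mod_cast hn.ne'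
    obtain ⟨z, hz⟩ := IsAlgClosed.exists_root B.charpoly hdeg
    exact ⟨z, Polynomial.mem_roots'.mpr ⟨B.charpoly_monic.ne_zero, hz⟩⟩
  obtain ⟨lam, hlammem, hlammin⟩ :=
    Set.exists_min_image _ (fun z : ℂ => ‖z‖) B.charpoly.roots.finite_toSet hrootsB_ne
  have hlammem' : lam ∈ B.charpoly.roots := hlammem
  have hlam_le : ‖lam‖ ≤ t * ε := by
    by_contra hcon
    push_neg at hcon
    have hlampos : 0 < ‖lam‖ := lt_of_le_of_lt (by positivity) hcon
    have e1 : cfc (fun z : ℂ => z⁻¹ * z) TB = cfc (fun z : ℂ => z⁻¹) TB * cfc (fun z : ℂ => z) TB :=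
      cfc_mul _ _ TB (Stmt5Aux.finite_contOn hfinB _) (Stmt5Aux.finite_contOn hfinB _)
    rw [cfc_id' ℂ TB] at e1
    have e2 : cfc (fun z : ℂ => z⁻¹ * z) TB = cfc (fun _ : ℂ => (1:ℂ)) TB := by
      apply cfc_congr
      intro z hz
      rw [hspecB] at hz
      have hzabs : ‖lam‖ ≤ ‖z‖ := hlammin z hz
      have hzne : z ≠ 0 := by
        intro h; rw [h] at hzabs; simp at hzabs; simp [hzabs] at hlampos
      exact inv_mul_cancel₀ hzne
    rw [cfc_const_one ℂ TB] at e2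
    have hSB : cfc (fun z : ℂ => z⁻¹) TB * TB = 1 := by rw [← e1, e2]
    have hSBnorm : ‖cfc (fun z : ℂ => z⁻¹) TB‖ ≤ (‖lam‖)⁻¹ := by
      apply norm_cfc_le (by positivity)
      intro z hz
      rw [hspecB] at hz
      have hzabs : ‖lam‖ ≤ ‖z‖ := hlammin z hz
      rw [norm_inv]
      exact inv_anti₀ hlampos hzabs
    have happ : ψ₀ = cfc (fun z : ℂ => z⁻¹) TB (TB ψ₀) := by
      have h := congrArg (fun L : EuclideanSpace ℂ (Fin n) →L[ℂ] EuclideanSpace ℂ (Fin n) => L ψ₀) hSB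
      simpa [ContinuousLinearMap.mul_apply, ContinuousLinearMap.one_apply] using h.symm
    have hchain : (1:ℝ) ≤ (‖lam‖)⁻¹ * (t * ε) := by
      calc (1:ℝ) = ‖ψ₀‖ := hψ₀norm.symm
        _ = ‖cfc (fun z : ℂ => z⁻¹) TB (TB ψ₀)‖ := by rw [← happ]
        _ ≤ ‖cfc (fun z : ℂ => z⁻¹) TB‖ * ‖TB ψ₀‖ := ContinuousLinearMap.le_opNorm _ _
        _ ≤ (‖lam‖)⁻¹ * (t * ε) := by
            apply mul_le_mul hSBnorm hTBψ₀ (norm_nonneg _) (by positivity)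
    have hlt : (‖lam‖)⁻¹ * (t * ε) < 1 := by
      rw [← div_eq_inv_mul]
      exact div_lt_one hlampos |>.mpr hcon
    linarith
  have hlam_lt : ‖lam‖ < ε / 2 := by nlinarith
  -- unit eigenvectors
  have eigB : ∀ z ∈ B.charpoly.roots,
      ∃ x : EuclideanSpace ℂ (Fin n), ‖x‖ = 1 ∧ TB x = z • x := by
    intro z hz
    obtain ⟨x, hxne, hx⟩ := (Stmt5Aux.mem_roots_iff_eig B z).mp hz
    have hxn : ‖x‖ ≠ 0 := norm_ne_zero_iff.mpr hxne
    refine ⟨(‖x‖ : ℂ)⁻¹ • x, ?_, ?_⟩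
    · rw [norm_smul, norm_inv, Complex.norm_real, Real.norm_eq_abs,
        abs_of_nonneg (norm_nonneg x)]
      field_simp
    · rw [map_smul, hx, smul_comm]
  have hTeig : ∀ (μ : ℂ) (φ : EuclideanSpace ℂ (Fin n)), ‖φ‖ = 1 → TB φ = μ • φ →
      ‖T φ‖ ≤ ‖μ‖ + t * ε := by
    intro μ φ h1 h2
    have e : T φ = TB φ + (T φ - TB φ) := by abel
    calc ‖T φ‖ = ‖TB φ + (T φ - TB φ)‖ := by rw [← e]
      _ ≤ ‖TB φ‖ + ‖T φ - TB φ‖ := norm_add_le _ _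
      _ ≤ ‖μ‖ + t * ε := by
          have d1 : ‖TB φ‖ = ‖μ‖ := by
            rw [h2, norm_smul, h1, mul_one]
          have d2 := hdiff φ
          rw [h1, mul_one] at d2
          linarith
  -- uniqueness
  have huniq : ∀ μ ∈ B.charpoly.roots, ‖μ‖ < ε / 2 → μ = lam := by
    intro μ hμ hμlt
    by_contra hne'
    obtain ⟨φ₁, hφ₁n, hφ₁⟩ := eigB lam hlammem'
    obtain ⟨φ₂, hφ₂n, hφ₂⟩ := eigB μ hμ
    have horth12 : ⟪φ₁, φ₂⟫_ℂ = 0 := horth lam μ φ₁ φ₂ hφ₁ hφ₂ (fun h => hne' h.symm)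
    obtain ⟨c₁, hc₁, hw₁⟩ := decomp φ₁
    obtain ⟨c₂, hc₂, hw₂⟩ := decomp φ₂
    have hw₁' : ‖φ₁ - c₁ • ψ₀‖ ≤ 2 * t := by
      have h1 : ‖T φ₁‖ ≤ t * ε + t * ε := (hTeig lam φ₁ hφ₁n hφ₁).trans (by linarith)
      exact hw₁.trans (by rw [div_le_iff₀ hε]; nlinarith)
    have hw₂' : ‖φ₂ - c₂ • ψ₀‖ ≤ 1/2 + t := by
      have h1 : ‖T φ₂‖ ≤ ε/2 + t * ε := (hTeig μ φ₂ hφ₂n hφ₂).trans (by linarith)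
      exact hw₂.trans (by rw [div_le_iff₀ hε]; nlinarith)
    have hPw₁ : P (φ₁ - c₁ • ψ₀) = 0 := by
      rw [map_sub, map_smul, hPfix ψ₀ hTψ₀, hc₁, sub_self]
    have hPw₂ : P (φ₂ - c₂ • ψ₀) = 0 := by
      rw [map_sub, map_smul, hPfix ψ₀ hTψ₀, hc₂, sub_self]
    have hsplit : ⟪φ₁, φ₂⟫_ℂ =
        ⟪c₁ • ψ₀, c₂ • ψ₀⟫_ℂ + ⟪φ₁ - c₁ • ψ₀, φ₂ - c₂ • ψ₀⟫_ℂ := by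
      have e1 : φ₁ = c₁ • ψ₀ + (φ₁ - c₁ • ψ₀) := by abel
      have e2 : φ₂ = c₂ • ψ₀ + (φ₂ - c₂ • ψ₀) := by abel
      have cross1 : ⟪c₁ • ψ₀, φ₂ - c₂ • ψ₀⟫_ℂ = 0 := by
        rw [← hc₁, hPinner, hPw₂, inner_zero_right]
      have cross2 : ⟪φ₁ - c₁ • ψ₀, c₂ • ψ₀⟫_ℂ = 0 := by
        rw [← hc₂, ← hPinner, hPw₁, inner_zero_left]
      conv_lhs => rw [e1, e2]
      rw [inner_add_left, inner_add_right, inner_add_right, cross1, cross2]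
      ring
    have hinner0 : ⟪c₁ • ψ₀, c₂ • ψ₀⟫_ℂ = - ⟪φ₁ - c₁ • ψ₀, φ₂ - c₂ • ψ₀⟫_ℂ := by
      rw [horth12] at hsplit
      linear_combination -hsplit
    have hval : ⟪c₁ • ψ₀, c₂ • ψ₀⟫_ℂ = (starRingEnd ℂ) c₁ * c₂ := by
      rw [inner_smul_left, inner_smul_right, inner_self_eq_norm_sq_to_K, hψ₀norm]
      push_cast
      ring
    have habs : ‖c₁‖ * ‖c₂‖ ≤ ‖φ₁ - c₁ • ψ₀‖ * ‖φ₂ - c₂ • ψ₀‖ := by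
      have h1 : ‖(starRingEnd ℂ) c₁ * c₂‖ = ‖c₁‖ * ‖c₂‖ := by
        rw [norm_mul, Complex.norm_conj]
      calc ‖c₁‖ * ‖c₂‖ = ‖(starRingEnd ℂ) c₁ * c₂‖ := h1.symm
        _ = ‖⟪φ₁ - c₁ • ψ₀, φ₂ - c₂ • ψ₀⟫_ℂ‖ := by
            rw [← hval, hinner0, norm_neg]
        _ ≤ ‖φ₁ - c₁ • ψ₀‖ * ‖φ₂ - c₂ • ψ₀‖ := norm_inner_le_norm _ _
    have hc₁abs : 1 - 2*t ≤ ‖c₁‖ := by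
      have e : ‖c₁ • ψ₀‖ = ‖c₁‖ := by
        rw [norm_smul, hψ₀norm, mul_one]
      have h1 : ‖φ₁‖ - ‖φ₁ - c₁ • ψ₀‖ ≤ ‖c₁ • ψ₀‖ := by
        have := norm_sub_norm_le φ₁ (φ₁ - c₁ • ψ₀)
        have e2 : φ₁ - (φ₁ - c₁ • ψ₀) = c₁ • ψ₀ := by abel
        rw [e2] at this
        linarith
      rw [e] at h1
      rw [hφ₁n] at h1
      linarith
    have hc₂abs : 1/2 - t ≤ ‖c₂‖ := by
      have e : ‖c₂ • ψ₀‖ = ‖c₂‖ := by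
        rw [norm_smul, hψ₀norm, mul_one]
      have h1 : ‖φ₂‖ - ‖φ₂ - c₂ • ψ₀‖ ≤ ‖c₂ • ψ₀‖ := by
        have := norm_sub_norm_le φ₂ (φ₂ - c₂ • ψ₀)
        have e2 : φ₂ - (φ₂ - c₂ • ψ₀) = c₂ • ψ₀ := by abel
        rw [e2] at this
        linarith
      rw [e, hφ₂n] at h1
      linarith
    have hnn1 : (0:ℝ) ≤ ‖φ₁ - c₁ • ψ₀‖ := norm_nonneg _
    have hnn2 : (0:ℝ) ≤ ‖φ₂ - c₂ • ψ₀‖ := norm_nonneg _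
    nlinarith [mul_le_mul hw₁' hw₂' hnn2 (by linarith : (0:ℝ) ≤ 2*t),
      mul_le_mul hc₁abs hc₂abs (by linarith) (norm_nonneg c₁)]
  refine ⟨lam, ?_, hlam_le, ?_⟩
  · ext z
    simp only [Set.mem_setOf_eq, Set.mem_singleton_iff]
    constructor
    · rintro ⟨hz1, hz2⟩
      exact huniq z hz1 hz2
    · rintro rfl
      exact ⟨hlammem', hlam_lt⟩
  · intro φ hφn hφeig ψ hψn hTψ
    obtain ⟨c, hc, hcb⟩ := decomp ψ
    obtain ⟨c', hc', hcb'⟩ := decomp φ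
    have h1 : ‖ψ - c • ψ₀‖ ≤ t := hcb.trans (by rw [div_le_iff₀ hε]; nlinarith)
    have hTφ : ‖T φ‖ ≤ 2 * (t * ε) := (hTeig lam φ hφn hφeig).trans (by linarith)
    have h2 : ‖φ - c' • ψ₀‖ ≤ 2 * t := hcb'.trans (by rw [div_le_iff₀ hε]; nlinarith)
    have hc'abs : 1 - 2*t ≤ ‖c'‖ := by
      have e : ‖c' • ψ₀‖ = ‖c'‖ := by
        rw [norm_smul, hψ₀norm, mul_one]
      have h3 : ‖φ‖ - ‖φ - c' • ψ₀‖ ≤ ‖c' • ψ₀‖ := by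
        have := norm_sub_norm_le φ (φ - c' • ψ₀)
        have e2 : φ - (φ - c' • ψ₀) = c' • ψ₀ := by abel
        rw [e2] at this
        linarith
      rw [e, hφn] at h3
      linarith
    have hc'pos : 0 < ‖c'‖ := by linarith
    have hc'ne : c' ≠ 0 := by
      intro h; rw [h] at hc'pos; simp at hc'pos
    have hcabs : ‖c‖ ≤ 1 := by
      have e : ‖c • ψ₀‖ = ‖c‖ := by
        rw [norm_smul, hψ₀norm, mul_one]
      rw [← e, ← hc]
      calc ‖P ψ‖ ≤ ‖P‖ * ‖ψ‖ := P.le_opNorm ψ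
        _ ≤ 1 := by rw [hψn, mul_one]; exact hPnorm
    refine ⟨c / c', ?_⟩
    have hid : ψ - (c / c') • φ = (ψ - c • ψ₀) - (c / c') • (φ - c' • ψ₀) := by
      have hmm : (c / c') • (c' • ψ₀) = c • ψ₀ := by
        rw [smul_smul, div_mul_cancel₀ _ hc'ne]
      rw [smul_sub, hmm]
      abel
    rw [hid]
    have hq : ‖(c / c') • (φ - c' • ψ₀)‖ = ‖c‖ / ‖c'‖ * ‖φ - c' • ψ₀‖ := by
      rw [norm_smul, norm_div]
    calc ‖(ψ - c • ψ₀) - (c / c') • (φ - c' • ψ₀)‖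
        ≤ ‖ψ - c • ψ₀‖ + ‖(c / c') • (φ - c' • ψ₀)‖ := norm_sub_le _ _
      _ = ‖ψ - c • ψ₀‖ + ‖c‖ / ‖c'‖ * ‖φ - c' • ψ₀‖ := by rw [hq]
      _ ≤ 16 * t := by
          have h2t : (0:ℝ) < 1 - 2*t := by linarith
          have hd : ‖c‖ / ‖c'‖ ≤ 1 / (1 - 2*t) :=
            div_le_div₀ zero_le_one hcabs h2t hc'abs
          have hvnn : (0:ℝ) ≤ ‖φ - c' • ψ₀‖ := norm_nonneg _
          have hkey2 : ‖c‖ / ‖c'‖ * ‖φ - c' • ψ₀‖ ≤ 1/(1-2*t) * (2*t) :=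
            mul_le_mul hd h2 hvnn (by positivity)
          have hfin : 1/(1-2*t) * (2*t) ≤ 15*t := by
            rw [div_mul_eq_mul_div, div_le_iff₀ h2t]
            nlinarith
          linarith

end
end
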